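/- arXiv:2603.25117 — 4 statements merged into one kernel-verified Lean document; each statement's English description precedes it below -/
import Mathlib

section
/- Let T be a triangulated category and let f : X → Y, g : Y → Z, h : Z → ΣU be morphisms with g ∘ f = 0 and h ∘ g = 0. If b and b' are both Massey products of (h,g,f), then there exist morphisms α : X → Σ⁻¹Z and β : Y → U such that b' − b = (Σ⁻¹h) ∘ α + β ∘ f, where Σ⁻¹h : Σ⁻¹Z → U denotes the inverse shift of h composed with the canonical isomorphism Σ⁻¹(ΣU) ≅ U. -/
open CategoryTheory Category Limits Pretriangulated

variable {C : Type*} [Category C] [Preadditive C] [HasZeroObject C] [HasShift C ℤ]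
  [∀ n : ℤ, (shiftFunctor C n).Additive] [Pretriangulated C] [IsTriangulated C]

/-- `b : X ⟶ U` is a Massey product of `(h, g, f)` if there is a distinguished triangle
`X ⟶ Y ⟶ Cf ⟶ X⟦1⟧` on `f` and a map `a : Cf ⟶ Z` with `a ∘ i = g` and `(Σb) ∘ p = h ∘ a`. -/
def IsMasseyProduct {X Y Z U : C} (f : X ⟶ Y) (g : Y ⟶ Z) (h : Z ⟶ U⟦(1:ℤ)⟧)
    (b : X ⟶ U) : Prop :=
  ∃ (Cf : C) (i : Y ⟶ Cf) (p : Cf ⟶ X⟦(1:ℤ)⟧) (a : Cf ⟶ Z),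
    (Triangle.mk f i p ∈ distTriang C) ∧ i ≫ a = g ∧ p ≫ b⟦(1:ℤ)⟧' = a ≫ h


/-- `Σ⁻¹h : Z⟦-1⟧ ⟶ U`: the inverse shift of `h : Z ⟶ U⟦1⟧`, composed with the
canonical isomorphism `(U⟦1⟧)⟦-1⟧ ≅ U`. -/
noncomputable def negShift {Z U : C} (h : Z ⟶ U⟦(1:ℤ)⟧) : Z⟦(-1:ℤ)⟧ ⟶ U :=
  h⟦(-1:ℤ)⟧' ≫ (shiftShiftNeg U (1:ℤ)).hom

/-- Any two Massey products of `(h,g,f)` differ by an element of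
`(Σ⁻¹h) ∘ Hom(X, Σ⁻¹Z) + Hom(Y, U) ∘ f`. -/
theorem massey_products_sub {X Y Z U : C} (f : X ⟶ Y) (g : Y ⟶ Z) (h : Z ⟶ U⟦(1:ℤ)⟧)
    (hgf : f ≫ g = 0) (hhg : g ≫ h = 0) (b b' : X ⟶ U)
    (hb : IsMasseyProduct f g h b) (hb' : IsMasseyProduct f g h b') :
    ∃ (α : X ⟶ Z⟦(-1:ℤ)⟧) (β : Y ⟶ U), b' - b = α ≫ negShift h + f ≫ β := by
  obtain ⟨Cf, i, p, a, hT, hia, hpb⟩ := hb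
  obtain ⟨Cf', i', p', a', hT', hia', hpb'⟩ := hb'
  obtain ⟨c, hc1, hc2⟩ := complete_distinguished_triangle_morphism _ _ hT hT' (𝟙 X) (𝟙 Y)
    (by exact (comp_id f).trans (id_comp f).symm)
  change Cf ⟶ Cf' at c
  change i ≫ c = 𝟙 Y ≫ i' at hc1
  change p ≫ (𝟙 X)⟦(1:ℤ)⟧' = c ≫ p' at hc2
  rw [id_comp] at hc1
  rw [CategoryTheory.Functor.map_id, comp_id] at hc2
  -- transport a' back along c
  set a'' : Cf ⟶ Z := c ≫ a' with ha''
  have hia'' : i ≫ a'' = g := by rw [ha'', ← assoc, hc1, hia']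
  have hpb'' : p ≫ b'⟦(1:ℤ)⟧' = a'' ≫ h := by
    rw [hc2, assoc, hpb', ha'', assoc]
  -- factor a'' - a through p
  have h1 : i ≫ (a'' - a) = 0 := by rw [Preadditive.comp_sub, hia'', hia, sub_self]
  obtain ⟨γ, hγ⟩ := Triangle.yoneda_exact₃ _ hT (a'' - a) h1
  change X⟦(1:ℤ)⟧ ⟶ Z at γ
  change a'' - a = p ≫ γ at hγ
  -- factor (b' - b)⟦1⟧ - γ ≫ h through -f⟦1⟧
  have h2 : p ≫ ((b' - b)⟦(1:ℤ)⟧' - γ ≫ h) = 0 := by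
    rw [Preadditive.comp_sub, Functor.map_sub, Preadditive.comp_sub, hpb'', hpb, ← assoc, ← hγ,
      Preadditive.sub_comp, sub_self]
  obtain ⟨δ, hδ⟩ := Triangle.yoneda_exact₂ _
    (rot_of_distTriang _ (rot_of_distTriang _ hT))
    ((b' - b)⟦(1:ℤ)⟧' - γ ≫ h) h2
  change Y⟦(1:ℤ)⟧ ⟶ U⟦(1:ℤ)⟧ at δ
  change (b' - b)⟦(1:ℤ)⟧' - γ ≫ h = (-f⟦(1:ℤ)⟧') ≫ δ at hδ
  have E : (b' - b)⟦(1:ℤ)⟧' = γ ≫ h - f⟦(1:ℤ)⟧' ≫ δ := by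
    rw [sub_eq_iff_eq_add] at hδ
    rw [hδ]
    simp only [Preadditive.neg_comp]
    abel
  refine ⟨(shiftShiftNeg X (1:ℤ)).inv ≫ γ⟦(-1:ℤ)⟧',
    -((shiftShiftNeg Y (1:ℤ)).inv ≫ δ⟦(-1:ℤ)⟧' ≫ (shiftShiftNeg U (1:ℤ)).hom), ?_⟩
  have key : b' - b = (shiftShiftNeg X (1:ℤ)).inv ≫ ((b' - b)⟦(1:ℤ)⟧')⟦(-1:ℤ)⟧' ≫
      (shiftShiftNeg U (1:ℤ)).hom := by
    rw [shift_shift_neg']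
    simp [shiftEquiv, shiftEquiv']
  have nat : (shiftShiftNeg X (1:ℤ)).inv ≫ (f⟦(1:ℤ)⟧')⟦(-1:ℤ)⟧' =
      f ≫ (shiftShiftNeg Y (1:ℤ)).inv :=
    ((shiftEquiv C (1:ℤ)).unitIso.hom.naturality f).symm
  have T1 : (shiftShiftNeg X (1:ℤ)).inv ≫ (γ ≫ h)⟦(-1:ℤ)⟧' ≫ (shiftShiftNeg U (1:ℤ)).hom =
      ((shiftShiftNeg X (1:ℤ)).inv ≫ γ⟦(-1:ℤ)⟧') ≫ negShift h := by
    rw [negShift, Functor.map_comp]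
    simp only [assoc]
  have T2 : (shiftShiftNeg X (1:ℤ)).inv ≫ (f⟦(1:ℤ)⟧' ≫ δ)⟦(-1:ℤ)⟧' ≫
      (shiftShiftNeg U (1:ℤ)).hom =
      f ≫ ((shiftShiftNeg Y (1:ℤ)).inv ≫ δ⟦(-1:ℤ)⟧' ≫ (shiftShiftNeg U (1:ℤ)).hom) := by
    rw [Functor.map_comp]
    slice_lhs 1 2 => rw [nat]
    simp only [assoc]
  rw [key, E, Functor.map_sub, Preadditive.sub_comp, Preadditive.comp_sub, T1, T2,
    Preadditive.comp_neg]
  abel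
end

section
/- Let T be a triangulated category and let f : X → Y, g : Y → Z, h : Z → ΣU be morphisms with g ∘ f = 0 and h ∘ g = 0. If b is a Massey product of (h,g,f), then for every pair of morphisms α : X → Σ⁻¹Z and β : Y → U, the morphism b + (Σ⁻¹h) ∘ α + β ∘ f is again a Massey product of (h,g,f). Together with the previous statement, ⟨h,g,f⟩ is a coset of the subgroup (Σ⁻¹h) ∘ Hom(X, Σ⁻¹Z) + Hom(Y,U) ∘ f of Hom(X,U). -/
open CategoryTheory Category Limits Pretriangulated

variable {C : Type*} [Category C] [Preadditive C] [HasZeroObject C] [HasShift C ℤ]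
  [∀ n : ℤ, (shiftFunctor C n).Additive] [Pretriangulated C] [IsTriangulated C]

/-- Adding any element of `(Σ⁻¹h) ∘ Hom(X, Σ⁻¹Z) + Hom(Y, U) ∘ f` to a Massey product of
`(h,g,f)` again gives a Massey product of `(h,g,f)`. -/
theorem massey_products_add {X Y Z U : C} (f : X ⟶ Y) (g : Y ⟶ Z) (h : Z ⟶ U⟦(1:ℤ)⟧)
    (hgf : f ≫ g = 0) (hhg : g ≫ h = 0) (b : X ⟶ U)
    (hb : IsMasseyProduct f g h b) (α : X ⟶ Z⟦(-1:ℤ)⟧) (β : Y ⟶ U) :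
    IsMasseyProduct f g h (b + α ≫ negShift h + f ≫ β) := by
  obtain ⟨Cf, i, p, a, hT, hia, hpb⟩ := hb
  refine ⟨Cf, i, p, a + p ≫ α⟦(1:ℤ)⟧' ≫ (shiftNegShift Z (1:ℤ)).hom, hT, ?_, ?_⟩
  · have h0 : i ≫ p = 0 := comp_distTriang_mor_zero₂₃ _ hT
    rw [Preadditive.comp_add, hia, reassoc_of% h0]
    simp
  · have h1 : p ≫ (-(f⟦(1:ℤ)⟧')) = 0 :=
      comp_distTriang_mor_zero₂₃ _ (rot_of_distTriang _ hT)
    have h1' : p ≫ f⟦(1:ℤ)⟧' = 0 := by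
      rw [Preadditive.comp_neg, neg_eq_zero] at h1; exact h1
    have key : (shiftNegShift Z (1:ℤ)).hom ≫ h = (negShift h)⟦(1:ℤ)⟧' := by
      have nat := (shiftFunctorCompIsoId C (-1:ℤ) (1:ℤ) (by omega)).hom.naturality h
      dsimp at nat
      have key2 := shift_shiftFunctorCompIsoId_add_neg_cancel_hom_app (1:ℤ) U
      rw [negShift, Functor.map_comp]
      erw [key2]
      exact nat.symm
    simp only [Functor.map_add, Functor.map_comp, Preadditive.comp_add,
      Preadditive.add_comp, assoc, hpb, reassoc_of% h1', zero_comp, comp_zero, add_zero,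
      key]
end

section
/- Let T be a triangulated category and let Δ₁ = (X₁ → Y₁ → Z₁ → ΣX₁) and Δ₂ = (X₂ → Y₂ → Z₂ → ΣX₂) be triangles in T. If the direct sum triangle Δ₁ ⊕ Δ₂ (formed by taking biproducts of the corresponding objects, the biproduct maps of the corresponding morphisms, and identifying Σ(X₁ ⊕ X₂) with ΣX₁ ⊕ ΣX₂ via the canonical isomorphism) is a distinguished triangle, then Δ₁ is a distinguished triangle. Hence any direct summand of a distinguished triangle is distinguished. -/
open CategoryTheory Category Limits Pretriangulated

variable {C : Type*} [Category C] [Preadditive C] [HasZeroObject C] [HasShift C ℤ]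
  [∀ n : ℤ, (shiftFunctor C n).Additive] [Pretriangulated C] [IsTriangulated C]
  [HasBinaryBiproducts C]

instance (X Y : C) : PreservesBinaryBiproduct X Y (shiftFunctor C (1:ℤ)) :=
  preservesBinaryBiproduct_of_preservesBinaryProduct _

set_option linter.unusedSectionVars false

section Aux

lemma aux_inv_map_fst (A B : C) :
    ((shiftFunctor C (1:ℤ)).mapBiprod A B).inv ≫ (shiftFunctor C (1:ℤ)).map biprod.fst =
      biprod.fst := by
  rw [Functor.mapBiprod_inv]
  ext <;> simp [← Functor.map_comp]

lemma aux_inv_map_snd (A B : C) :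
    ((shiftFunctor C (1:ℤ)).mapBiprod A B).inv ≫ (shiftFunctor C (1:ℤ)).map biprod.snd =
      biprod.snd := by
  rw [Functor.mapBiprod_inv]
  ext <;> simp [← Functor.map_comp]

/-- The product over `WalkingPair` is the binary biproduct. -/
noncomputable def piPairIso (f : WalkingPair → C) :
    (∏ᶜ f) ≅ f WalkingPair.left ⊞ f WalkingPair.right where
  hom := biprod.lift (Pi.π f WalkingPair.left) (Pi.π f WalkingPair.right)
  inv := Pi.lift (fun j => WalkingPair.casesOn j biprod.fst biprod.snd)
  hom_inv_id := by
    ext j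
    rcases j with ⟨_ | _⟩ <;> simp
  inv_hom_id := by
    ext <;> simp

@[simp] lemma piPairIso_inv_π_left (f : WalkingPair → C) :
    (piPairIso f).inv ≫ Pi.π f WalkingPair.left = biprod.fst := by
  simp [piPairIso]

@[simp] lemma piPairIso_inv_π_right (f : WalkingPair → C) :
    (piPairIso f).inv ≫ Pi.π f WalkingPair.right = biprod.snd := by
  simp [piPairIso]

/-- Direct sum (biproduct) of two distinguished triangles is distinguished. -/
lemma biprodTriangle_distinguished (T₁ T₂ : Triangle C)
    (hT₁ : T₁ ∈ distTriang C) (hT₂ : T₂ ∈ distTriang C) :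
    Triangle.mk (biprod.map T₁.mor₁ T₂.mor₁) (biprod.map T₁.mor₂ T₂.mor₂)
      (biprod.map T₁.mor₃ T₂.mor₃ ≫ ((shiftFunctor C (1:ℤ)).mapBiprod T₁.obj₁ T₂.obj₁).inv)
      ∈ distTriang C := by
  let Tf : WalkingPair → Triangle C := fun j => WalkingPair.casesOn j T₁ T₂
  have hprod : productTriangle Tf ∈ distTriang C :=
    productTriangle_distinguished Tf (fun j => by cases j <;> assumption)
  refine isomorphic_distinguished _ hprod _ ?_
  refine Triangle.isoMk _ _ (piPairIso (fun j => (Tf j).obj₁)).symm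
    (piPairIso (fun j => (Tf j).obj₂)).symm (piPairIso (fun j => (Tf j).obj₃)).symm ?_ ?_ ?_
  · change biprod.map (Tf .left).mor₁ (Tf .right).mor₁ ≫ (piPairIso (fun j => (Tf j).obj₂)).inv =
      (piPairIso (fun j => (Tf j).obj₁)).inv ≫ Limits.Pi.map (fun j => (Tf j).mor₁)
    ext j
    all_goals rcases j with _ | _ <;> simp [piPairIso, Tf]
  · change biprod.map (Tf .left).mor₂ (Tf .right).mor₂ ≫ (piPairIso (fun j => (Tf j).obj₃)).inv =
      (piPairIso (fun j => (Tf j).obj₂)).inv ≫ Limits.Pi.map (fun j => (Tf j).mor₂)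
    ext j
    all_goals rcases j with _ | _ <;> simp [piPairIso, Tf]
  · change (biprod.map (Tf .left).mor₃ (Tf .right).mor₃ ≫
        ((shiftFunctor C (1:ℤ)).mapBiprod (Tf .left).obj₁ (Tf .right).obj₁).inv) ≫
        (shiftFunctor C (1:ℤ)).map (piPairIso (fun j => (Tf j).obj₁)).inv =
      (piPairIso (fun j => (Tf j).obj₃)).inv ≫ (Limits.Pi.map (fun j => (Tf j).mor₃) ≫
        inv (piComparison (shiftFunctor C (1:ℤ)) (fun j => (Tf j).obj₁)))
    rw [← cancel_mono (piComparison (shiftFunctor C (1:ℤ)) (fun j => (Tf j).obj₁))]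
    simp only [assoc, IsIso.inv_hom_id, comp_id]
    refine Pi.hom_ext _ _ (fun j => ?_)
    rcases j with ⟨_ | _⟩
    · rw [assoc, assoc, assoc, piComparison_comp_π, ← Functor.map_comp]
      simp only [piPairIso_inv_π_left, aux_inv_map_fst]
      simp [Tf, piPairIso]
    · rw [assoc, assoc, assoc, piComparison_comp_π, ← Functor.map_comp]
      simp only [piPairIso_inv_π_right, aux_inv_map_snd]
      simp [Tf, piPairIso]

end Aux

/-- If the direct sum of two triangles (formed with biproducts, identifying
`Σ(X₁ ⊞ X₂)` with `ΣX₁ ⊞ ΣX₂` via the canonical isomorphism) is distinguished, then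
the first summand triangle is distinguished. -/
theorem summand_of_distinguished {X₁ Y₁ Z₁ X₂ Y₂ Z₂ : C}
    (f₁ : X₁ ⟶ Y₁) (g₁ : Y₁ ⟶ Z₁) (h₁ : Z₁ ⟶ X₁⟦(1:ℤ)⟧)
    (f₂ : X₂ ⟶ Y₂) (g₂ : Y₂ ⟶ Z₂) (h₂ : Z₂ ⟶ X₂⟦(1:ℤ)⟧)
    (hsum : Triangle.mk (biprod.map f₁ f₂) (biprod.map g₁ g₂)
      (biprod.map h₁ h₂ ≫ ((shiftFunctor C (1:ℤ)).mapBiprod X₁ X₂).inv) ∈ distTriang C) :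
    Triangle.mk f₁ g₁ h₁ ∈ distTriang C := by
  obtain ⟨Q₁, g₁', h₁', hT₁'⟩ := distinguished_cocone_triangle f₁
  obtain ⟨Q₂, g₂', h₂', hT₂'⟩ := distinguished_cocone_triangle f₂
  have hsum' : Triangle.mk (biprod.map f₁ f₂) (biprod.map g₁' g₂')
      (biprod.map h₁' h₂' ≫ ((shiftFunctor C (1:ℤ)).mapBiprod X₁ X₂).inv) ∈ distTriang C :=
    biprodTriangle_distinguished _ _ hT₁' hT₂'
  -- complete (𝟙, 𝟙) to a morphism of distinguished triangles; its third map `c` is an iso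
  obtain ⟨c, hc₂, hc₃⟩ := complete_distinguished_triangle_morphism _ _ hsum hsum'
    (𝟙 _) (𝟙 _) (by exact (comp_id _).trans (id_comp _).symm)
  have hciso : IsIso c := by
    refine isIso₃_of_isIso₁₂
      ({ hom₁ := 𝟙 _, hom₂ := 𝟙 _, hom₃ := c,
         comm₁ := (comp_id _).trans (id_comp _).symm, comm₂ := hc₂, comm₃ := hc₃ } :
        Triangle.mk (biprod.map f₁ f₂) (biprod.map g₁ g₂)
          (biprod.map h₁ h₂ ≫ ((shiftFunctor C (1:ℤ)).mapBiprod X₁ X₂).inv) ⟶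
        Triangle.mk (biprod.map f₁ f₂) (biprod.map g₁' g₂')
          (biprod.map h₁' h₂' ≫ ((shiftFunctor C (1:ℤ)).mapBiprod X₁ X₂).inv))
      hsum hsum' ?_ ?_ <;> dsimp <;> exact IsIso.id _
  change (Z₁ ⊞ Z₂ ⟶ Q₁ ⊞ Q₂) at c
  change biprod.map g₁ g₂ ≫ c = 𝟙 (Y₁ ⊞ Y₂) ≫ biprod.map g₁' g₂' at hc₂
  change (biprod.map h₁ h₂ ≫ ((shiftFunctor C (1:ℤ)).mapBiprod X₁ X₂).inv) ≫
    (shiftFunctor C (1:ℤ)).map (𝟙 (X₁ ⊞ X₂)) =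
    c ≫ (biprod.map h₁' h₂' ≫ ((shiftFunctor C (1:ℤ)).mapBiprod X₁ X₂).inv) at hc₃
  rw [id_comp] at hc₂
  rw [CategoryTheory.Functor.map_id, comp_id] at hc₃
  replace hc₃ := hc₃.symm
  -- hc₂ : biprod.map g₁ g₂ ≫ c = biprod.map g₁' g₂'
  -- hc₃ : c ≫ (biprod.map h₁' h₂' ≫ σ.inv) = biprod.map h₁ h₂ ≫ σ.inv
  have hgu : g₁ ≫ (biprod.inl ≫ c ≫ biprod.fst) = g₁' := by
    have h := biprod.inl ≫= hc₂ =≫ biprod.fst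
    simpa using h
  have hkey : c ≫ biprod.fst ≫ h₁' = biprod.fst ≫ h₁ := by
    have h := hc₃ =≫ (shiftFunctor C (1:ℤ)).map biprod.fst
    simp only [assoc, aux_inv_map_fst] at h
    simpa using h
  have huh : (biprod.inl ≫ c ≫ biprod.fst) ≫ h₁' = h₁ := by
    simp only [assoc, hkey]
    simp
  have hdh : (biprod.inr ≫ c ≫ biprod.fst) ≫ h₁' = 0 := by
    simp only [assoc, hkey]
    simp
  have hfg : f₁ ≫ g₁ = 0 := by
    have h0 := comp_distTriang_mor_zero₁₂ _ hsum
    change biprod.map f₁ f₂ ≫ biprod.map g₁ g₂ = 0 at h0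
    have h := biprod.inl ≫= h0 =≫ biprod.fst
    simpa using h
  -- `u := biprod.inl ≫ c ≫ biprod.fst` is an isomorphism
  haveI : IsIso (biprod.inl ≫ c ≫ biprod.fst) := by
    refine isIso_of_yoneda_map_bijective _ (fun A => ⟨?_, ?_⟩)
    · -- injectivity
      intro p q hpq
      dsimp at hpq
      rw [← sub_eq_zero]
      have hru : (p - q) ≫ (biprod.inl ≫ c ≫ biprod.fst) = 0 := by
        rw [Preadditive.sub_comp, hpq, sub_self]
      have hrh : (p - q) ≫ h₁ = 0 := by
        rw [← huh, ← assoc, hru, zero_comp]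
      have hr3 : ((p - q) ≫ biprod.inl) ≫
          (biprod.map h₁ h₂ ≫ ((shiftFunctor C (1:ℤ)).mapBiprod X₁ X₂).inv) = 0 := by
        simp only [assoc, biprod.inl_map_assoc, reassoc_of% hrh, zero_comp]
      obtain ⟨g, hg⟩ := Triangle.coyoneda_exact₃ _ hsum ((p - q) ≫ biprod.inl) hr3
      change (A ⟶ Y₁ ⊞ Y₂) at g
      change (p - q) ≫ biprod.inl = g ≫ biprod.map g₁ g₂ at hg
      have hr1 : p - q = (g ≫ biprod.fst) ≫ g₁ := by
        have h := hg =≫ biprod.fst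
        simpa using h
      have hz0 : (g ≫ biprod.fst) ≫ g₁' = 0 := by
        rw [← hgu, ← assoc, ← hr1, hru]
      obtain ⟨x, hx⟩ := Triangle.coyoneda_exact₂ _ hT₁' (g ≫ biprod.fst) hz0
      change (A ⟶ X₁) at x
      change g ≫ biprod.fst = x ≫ f₁ at hx
      rw [hr1, hx, assoc, hfg, comp_zero]
    · -- surjectivity
      intro q
      have hzero : (q ≫ h₁' ≫ (shiftFunctor C (1:ℤ)).map biprod.inl) ≫
          (shiftFunctor C (1:ℤ)).map (biprod.map f₁ f₂) = 0 := by
        have h31 : h₁' ≫ (shiftFunctor C (1:ℤ)).map f₁ = 0 :=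
          comp_distTriang_mor_zero₃₁ _ hT₁'
        rw [assoc, assoc, ← Functor.map_comp, biprod.inl_map, Functor.map_comp,
          reassoc_of% h31]
        simp
      obtain ⟨z, hz⟩ := Triangle.coyoneda_exact₁ _ hsum
        (q ≫ h₁' ≫ (shiftFunctor C (1:ℤ)).map biprod.inl) hzero
      change (A ⟶ Z₁ ⊞ Z₂) at z
      change q ≫ h₁' ≫ (shiftFunctor C (1:ℤ)).map biprod.inl =
        z ≫ biprod.map h₁ h₂ ≫ ((shiftFunctor C (1:ℤ)).mapBiprod X₁ X₂).inv at hz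
      have h5 : q ≫ h₁' = z ≫ biprod.fst ≫ h₁ := by
        have h := hz =≫ (shiftFunctor C (1:ℤ)).map biprod.fst
        simp only [assoc, aux_inv_map_fst, ← Functor.map_comp, biprod.inl_fst,
          CategoryTheory.Functor.map_id, comp_id, biprod.map_fst] at h
        exact h
      have key : (z ≫ c ≫ biprod.fst) ≫ h₁' = q ≫ h₁' := by
        simp only [assoc, hkey]
        exact h5.symm
      obtain ⟨y, hy⟩ := Triangle.coyoneda_exact₃ _ hT₁' (q - z ≫ c ≫ biprod.fst)
        (by change (q - z ≫ c ≫ biprod.fst) ≫ h₁' = 0; rw [Preadditive.sub_comp, key, sub_self])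
      change (A ⟶ Y₁) at y
      change q - z ≫ c ≫ biprod.fst = y ≫ g₁' at hy
      obtain ⟨δ, hδ⟩ := Triangle.coyoneda_exact₃ _ hT₁' (biprod.inr ≫ c ≫ biprod.fst) hdh
      change (Z₂ ⟶ Y₁) at δ
      change biprod.inr ≫ c ≫ biprod.fst = δ ≫ g₁' at hδ
      refine ⟨z ≫ biprod.fst + z ≫ biprod.snd ≫ δ ≫ g₁ + y ≫ g₁, ?_⟩
      dsimp only
      have t2eq : (z ≫ biprod.snd ≫ δ ≫ g₁) ≫ (biprod.inl ≫ c ≫ biprod.fst) =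
          z ≫ biprod.snd ≫ biprod.inr ≫ c ≫ biprod.fst := by
        simp only [assoc, hgu]
        rw [← hδ]
      have t3eq : (y ≫ g₁) ≫ (biprod.inl ≫ c ≫ biprod.fst) = q - z ≫ c ≫ biprod.fst := by
        simp only [assoc, hgu]
        exact hy.symm
      have inner : biprod.fst ≫ biprod.inl ≫ c ≫ biprod.fst +
          biprod.snd ≫ biprod.inr ≫ c ≫ biprod.fst = c ≫ biprod.fst := by
        simp only [← assoc]
        rw [← Preadditive.add_comp, ← Preadditive.add_comp, biprod.total, id_comp]
      have t12 : (z ≫ biprod.fst) ≫ (biprod.inl ≫ c ≫ biprod.fst) +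
          z ≫ biprod.snd ≫ biprod.inr ≫ c ≫ biprod.fst = z ≫ c ≫ biprod.fst := by
        simp only [assoc, ← Preadditive.comp_add]
        rw [inner]
      rw [Preadditive.add_comp, Preadditive.add_comp, t2eq, t3eq, t12]
      abel
  exact isomorphic_distinguished _ hT₁' _
    (Triangle.isoMk _ _ (Iso.refl _) (Iso.refl _)
      (@asIso C _ Z₁ Q₁ (biprod.inl ≫ c ≫ biprod.fst) this)
      (by exact (comp_id _).trans (id_comp _).symm) (by exact hgu.trans (id_comp _).symm)
      (by change h₁ ≫ (shiftFunctor C (1:ℤ)).map (𝟙 X₁) = (biprod.inl ≫ c ≫ biprod.fst) ≫ h₁'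
          rw [CategoryTheory.Functor.map_id, comp_id, huh]))
end

section
/- Let k be a field of characteristic zero, m a natural number, and K the fraction field of the polynomial ring k[x₁,…,x_m]. Then the K-module of k-linear derivations Der_k(K) = Derivation k K K is a free K-module of rank m; in particular its dimension over K equals m. -/
noncomputable section

open TrivSqZeroExt

section Loc

variable {k A F : Type*} [CommRing k] [CommRing A] [Algebra k A] [Field F]
  [Algebra A F] [Algebra k F] [IsScalarTower k A F] [IsFractionRing A F]

/-- The ring hom `A → F ⊕ F` attached to a derivation. -/
def Derivation.tszeHom (d : Derivation k A F) : A →+* TrivSqZeroExt F F where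
  toFun a := (algebraMap A F a, d a)
  map_one' := by ext <;> simp
  map_mul' a b := by
    ext
    · simp [fst_mul]; rfl
    · simp only [snd_mul, fst_mk, snd_mk, smul_eq_mul, op_smul_eq_smul]
      show _ = algebraMap A F a * d b + d a * algebraMap A F b
      ring
      rw [d.leibniz]
      simp [Algebra.smul_def, mul_comm]
  map_zero' := by ext <;> simp
  map_add' a b := by ext <;> simp <;> rfl

lemma Derivation.tszeHom_isUnit (d : Derivation k A F) (s : nonZeroDivisors A) :
    IsUnit (d.tszeHom s) := by
  rw [isUnit_iff_isUnit_fst]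
  exact IsLocalization.map_units F s

/-- The lifted ring hom `F → F ⊕ F`. -/
def Derivation.tszeLift (d : Derivation k A F) : F →+* TrivSqZeroExt F F :=
  IsLocalization.lift (M := nonZeroDivisors A) d.tszeHom_isUnit

lemma Derivation.tszeLift_algebraMap (d : Derivation k A F) (a : A) :
    d.tszeLift (algebraMap A F a) = d.tszeHom a :=
  IsLocalization.lift_eq _ a

lemma Derivation.tszeLift_fst (d : Derivation k A F) (x : F) : (d.tszeLift x).fst = x := by
  have : (fstHom F F F).toRingHom.comp d.tszeLift = RingHom.id F := by
    apply IsLocalization.ringHom_ext (nonZeroDivisors A)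
    ext a
    simp [tszeLift_algebraMap, tszeHom]
    rfl
  exact DFunLike.congr_fun this x

lemma Derivation.tszeLift_snd_mul (d : Derivation k A F) (x y : F) :
    (d.tszeLift (x * y)).snd = x * (d.tszeLift y).snd + y * (d.tszeLift x).snd := by
  rw [map_mul, snd_mul, d.tszeLift_fst, d.tszeLift_fst]
  simp [op_smul_eq_smul, mul_comm]

/-- Extend a derivation `A → F` to a derivation `F → F`. -/
def Derivation.extendFraction (d : Derivation k A F) : Derivation k F F where
  toFun x := (d.tszeLift x).snd
  map_add' x y := by show (d.tszeLift (x+y)).snd = _; rw [map_add, snd_add]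
  map_smul' c x := by
    have hc : (d.tszeLift (algebraMap k F c)).snd = 0 := by
      rw [IsScalarTower.algebraMap_apply k A F, d.tszeLift_algebraMap]
      show d (algebraMap k A c) = 0
      exact d.map_algebraMap c
    show (d.tszeLift (c • x)).snd = c • (d.tszeLift x).snd
    rw [Algebra.smul_def, d.tszeLift_snd_mul, hc, Algebra.smul_def]
    ring
  map_one_eq_zero' := by
    show (d.tszeLift 1).snd = 0
    rw [map_one, snd_one]
  leibniz' x y := by
    show (d.tszeLift (x * y)).snd = x • (d.tszeLift y).snd + y • (d.tszeLift x).snd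
    rw [d.tszeLift_snd_mul]; simp

lemma Derivation.extendFraction_algebraMap (d : Derivation k A F) (a : A) :
    d.extendFraction (algebraMap A F a) = d a := by
  show (d.tszeLift (algebraMap A F a)).snd = d a
  rw [d.tszeLift_algebraMap]; rfl

end Loc

section Main

variable (k : Type) [Field k] [CharZero k] (m : ℕ)

/-- `K` is the fraction field of the polynomial ring `k[x₁, …, x_m]`. -/
abbrev K : Type := FractionRing (MvPolynomial (Fin m) k)

/-- Evaluation of a derivation on the coordinates. -/
def derivEval : Derivation k (K k m) (K k m) →ₗ[K k m] (Fin m → K k m) where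
  toFun D i := D (algebraMap (MvPolynomial (Fin m) k) (K k m) (MvPolynomial.X i))
  map_add' D₁ D₂ := rfl
  map_smul' c D := rfl

lemma derivEval_bijective : Function.Bijective (derivEval k m) := by
  constructor
  · intro D₁ D₂ h
    have hA : ∀ a : MvPolynomial (Fin m) k,
        D₁ (algebraMap _ (K k m) a) = D₂ (algebraMap _ (K k m) a) := by
      have : D₁.compAlgebraMap (MvPolynomial (Fin m) k)
          = D₂.compAlgebraMap (MvPolynomial (Fin m) k) := by
        apply MvPolynomial.derivation_ext
        intro i
        exact congrFun h i
      intro a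
      exact DFunLike.congr_fun this a
    ext x
    obtain ⟨⟨a, s⟩, hx⟩ := IsLocalization.surj (M := nonZeroDivisors (MvPolynomial (Fin m) k)) x
    have h1 : D₁ (x * algebraMap _ (K k m) (s : MvPolynomial (Fin m) k))
        = D₂ (x * algebraMap _ (K k m) (s : MvPolynomial (Fin m) k)) := by
      rw [hx]; exact hA a
    rw [Derivation.leibniz, Derivation.leibniz, hA] at h1
    have hs : (algebraMap (MvPolynomial (Fin m) k) (K k m)) (s : MvPolynomial (Fin m) k) ≠ 0 := by
      have := IsLocalization.map_units (K k m) s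
      exact this.ne_zero
    have h2 := add_left_cancel h1
    rw [smul_eq_mul, smul_eq_mul] at h2
    exact mul_left_cancel₀ hs h2
  · intro v
    refine ⟨(MvPolynomial.mkDerivation k v).extendFraction, ?_⟩
    funext i
    show (MvPolynomial.mkDerivation k v).extendFraction (algebraMap _ _ (MvPolynomial.X i)) = v i
    rw [Derivation.extendFraction_algebraMap, MvPolynomial.mkDerivation_X]

/-- The `K`-module `Der_k(K)` of `k`-linear derivations of `K` is a free `K`-module of
rank `m`; in particular its dimension over `K` equals `m`. -/
theorem derivations_fractionField_free_of_rank_m :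
    Module.Free (K k m) (Derivation k (K k m) (K k m)) ∧
      Module.finrank (K k m) (Derivation k (K k m) (K k m)) = m := by
  have e : Derivation k (K k m) (K k m) ≃ₗ[K k m] (Fin m → K k m) :=
    LinearEquiv.ofBijective (derivEval k m) (derivEval_bijective k m)
  refine ⟨Module.Free.of_equiv e.symm, ?_⟩
  rw [e.finrank_eq]
  simp

end Main
end
end
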